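/- Let s > 0, let P satisfy H1, and let 0 < x₀ ≤ x₁. If γ is a positive solution of the Dyson–Schwinger ODE on [x₀, x₁], then for every x ∈ [x₀, x₁] the integral identity γ(x) = (x/x₀)^{1/s}·(1 + γ(x₀)) − 1 − x^{1/s}·∫_{x₀}^x P(z) / (s·z^{1+1/s}·γ(z)) dz holds. -/

import Mathlib

open Real MeasureTheory Filter Set

noncomputable section

/-- `γ` is a positive solution of the Dyson–Schwinger ODE
`γ'(x) = (γ(x) + γ(x)² − P(x)) / (s·x·γ(x))` on the set `I`. -/
def IsDSSolution (s : ℝ) (P γ : ℝ → ℝ) (I : Set ℝ) : Prop :=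
  (∀ x ∈ I, 0 < γ x) ∧
    ∀ x ∈ I, HasDerivWithinAt γ ((γ x + (γ x) ^ 2 - P x) / (s * x * γ x)) I x

/-- Hypothesis H1: `P` is twice continuously differentiable on `[0,∞)`,
`P 0 = 0`, and `P x > 0` for `x > 0`. -/
def H1 (P : ℝ → ℝ) : Prop :=
  ContDiffOn ℝ 2 P (Set.Ici 0) ∧ P 0 = 0 ∧ ∀ x > (0 : ℝ), 0 < P x

/-- Hypothesis H2: `P` is strictly increasing on `[0,∞)`. -/
def H2 (P : ℝ → ℝ) : Prop := StrictMonoOn P (Set.Ici 0)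

/-- The nullcline `γ_c(x) = (√(1 + 4 P x) − 1)/2`. -/
def gammaC (P : ℝ → ℝ) (x : ℝ) : ℝ := (Real.sqrt (1 + 4 * P x) - 1) / 2

/-!
The integrating factor `x ^ (-1/s)` removes the terms `γ + γ² = γ (1 + γ)` from the equation:
along a solution, `x ^ (-1/s) * (1 + γ x)` has derivative `-P x / (s * x ^ (1 + 1/s) * γ x)`.
The identity is the fundamental theorem of calculus for this function, solved for `γ x`.
-/

theorem intervalIntegral.integral_eq_sub_of_hasDerivWithinAt_Icc {f f' : ℝ → ℝ} {a b : ℝ}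
    (hab : a ≤ b) (hderiv : ∀ x ∈ Icc a b, HasDerivWithinAt f (f' x) (Icc a b) x)
    (hint : IntervalIntegrable f' volume a b) :
    ∫ x in a..b, f' x = f b - f a :=
  integral_eq_sub_of_hasDerivAt_of_le hab
    (fun x hx => (hderiv x hx).continuousWithinAt)
    (fun x hx => (hderiv x (Ioo_subset_Icc_self hx)).hasDerivAt (Icc_mem_nhds hx.1 hx.2))
    hint

namespace IsDSSolution

variable {s : ℝ} {P γ : ℝ → ℝ}

theorem continuousOn {I : Set ℝ} (hγ : IsDSSolution s P γ I) : ContinuousOn γ I :=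
  fun x hx => (hγ.2 x hx).continuousWithinAt

theorem hasDerivWithinAt_integratingFactor {I : Set ℝ} (hs : s ≠ 0)
    (hγ : IsDSSolution s P γ I) {x : ℝ} (hx : 0 < x) (hxI : x ∈ I) :
    HasDerivWithinAt (fun y => y ^ (-(1 / s)) * (1 + γ y))
      (-(P x / (s * x ^ (1 + 1 / s) * γ x))) I x := by
  have hγx : γ x ≠ 0 := (hγ.1 x hxI).ne'
  have hpow : HasDerivWithinAt (fun y : ℝ => y ^ (-(1 / s)))
      (-(1 / s) * x ^ (-(1 / s) - 1)) I x :=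
    (hasDerivAt_rpow_const (Or.inl hx.ne')).hasDerivWithinAt
  refine (hpow.mul ((hγ.2 x hxI).const_add 1)).congr_deriv ?_
  have hxc : x ^ (1 / s) ≠ 0 := (rpow_pos_of_pos hx _).ne'
  rw [rpow_sub hx, rpow_neg hx.le, rpow_add hx, rpow_one]
  field_simp
  ring

theorem integral_eq {x₀ x₁ x : ℝ} (hs : s ≠ 0) (hx₀ : 0 < x₀) (hP : ContinuousOn P (Icc x₀ x₁))
    (hγ : IsDSSolution s P γ (Icc x₀ x₁)) (hx : x ∈ Icc x₀ x₁) :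
    ∫ z in x₀..x, P z / (s * z ^ (1 + 1 / s) * γ z) =
      x₀ ^ (-(1 / s)) * (1 + γ x₀) - x ^ (-(1 / s)) * (1 + γ x) := by
  have hsub : Icc x₀ x ⊆ Icc x₀ x₁ := Icc_subset_Icc_right hx.2
  have hpos : ∀ z ∈ Icc x₀ x, 0 < z := fun z hz => hx₀.trans_le hz.1
  have hcont : ContinuousOn (fun z => P z / (s * z ^ (1 + 1 / s) * γ z)) (Icc x₀ x) :=
    (hP.mono hsub).div
      ((continuousOn_const.mul (continuousOn_id.rpow_const fun z hz => Or.inl (hpos z hz).ne')).mul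
        (hγ.continuousOn.mono hsub))
      fun z hz => mul_ne_zero (mul_ne_zero hs (rpow_pos_of_pos (hpos z hz) _).ne')
        (hγ.1 z (hsub hz)).ne'
  have hint := (hcont.intervalIntegrable_of_Icc (μ := volume) hx.1).neg
  have hftc := intervalIntegral.integral_eq_sub_of_hasDerivWithinAt_Icc hx.1
    (fun z hz => (hγ.hasDerivWithinAt_integratingFactor hs (hpos z hz) (hsub hz)).mono
      hsub) hint
  rw [intervalIntegral.integral_neg] at hftc
  linarith

end IsDSSolution

theorem stmt_2_general (s : ℝ) (hs : 0 < s) (P : ℝ → ℝ) (hP : H1 P) (x₀ x₁ : ℝ)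
    (hx₀ : 0 < x₀) (γ : ℝ → ℝ)
    (hγ : IsDSSolution s P γ (Set.Icc x₀ x₁)) :
    ∀ x ∈ Set.Icc x₀ x₁,
      γ x = (x / x₀) ^ (1 / s) * (1 + γ x₀) - 1 -
        x ^ (1 / s) * ∫ z in x₀..x, P z / (s * z ^ (1 + 1 / s) * γ z) := by
  intro x hx
  have hPcont : ContinuousOn P (Icc x₀ x₁) :=
    hP.1.continuousOn.mono fun z hz => hx₀.le.trans hz.1
  have hxc : x ^ (1 / s) ≠ 0 := (rpow_pos_of_pos (hx₀.trans_le hx.1) _).ne'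
  rw [hγ.integral_eq hs.ne' hx₀ hPcont hx, div_rpow (hx₀.trans_le hx.1).le hx₀.le,
    rpow_neg hx₀.le, rpow_neg (hx₀.trans_le hx.1).le]
  field_simp
  ring

theorem stmt_2 (s : ℝ) (hs : 0 < s) (P : ℝ → ℝ) (hP : H1 P) (x₀ x₁ : ℝ)
    (hx₀ : 0 < x₀) (hx₀₁ : x₀ ≤ x₁) (γ : ℝ → ℝ)
    (hγ : IsDSSolution s P γ (Set.Icc x₀ x₁)) :
    ∀ x ∈ Set.Icc x₀ x₁,
      γ x = (x / x₀) ^ (1 / s) * (1 + γ x₀) - 1 -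
        x ^ (1 / s) * ∫ z in x₀..x, P z / (s * z ^ (1 + 1 / s) * γ z) :=
  stmt_2_general s hs P hP x₀ x₁ hx₀ γ hγ
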